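/- 'Minimal model programme' for 1-cycles, part 2 (Theorem 3.16.2, universality): Let F be a regular one-dimensional tropical fan in ℝ^n with primitive generators v_1, …, v_q spanning ℝ^n and weights ω_1, …, ω_q. Then there exist D ≥ 1 and a surjective ℤ-linear map π_F : ℤ^n → ℤ^D exhibiting F as a direct sum of one-dimensional Bergman fans, such that for every r ≥ 1 and every ℤ-linear map π : ℤ^n → ℤ^r which maps F onto a direct sum of one-dimensional Bergman fans with pushforward weights 1, there exists a ℤ-linear map ψ : ℤ^D → ℤ^r with π = ψ ∘ π_F. -/

import Mathlib

/-- Integer pairing of a functional `l ∈ (ℤⁿ)^∨` with a vector `x ∈ ℤⁿ`. -/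
def dotZ {n : ℕ} (l x : Fin n → ℤ) : ℤ := ∑ j, l j * x j

/-- Value of the nonnegative tropical regular function `max(0, l₁, …, l_k)` at `x ∈ ℤⁿ`. -/
def tropEvalZ {n k : ℕ} (l : Fin k → Fin n → ℤ) (x : Fin n → ℤ) : ℤ :=
  Finset.univ.fold max 0 (fun s => dotZ (l s) x)

/-- A one-dimensional tropical fan in ℝⁿ: pairwise distinct primitive integer vectors
`v i` (the primitive generators of the rays) spanning ℝⁿ, with positive integer weights
`w i`, subject to the balancing condition `∑ i, w i • v i = 0`. -/
structure TropFan1 (n q : ℕ) where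
  v : Fin q → Fin n → ℤ
  w : Fin q → ℤ
  v_inj : Function.Injective v
  v_prim : ∀ i, Finset.univ.gcd (v i) = 1
  w_pos : ∀ i, 0 < w i
  balanced : ∑ i, w i • v i = 0
  spans : Submodule.span ℝ (Set.range fun i => fun j => ((v i j : ℝ))) = ⊤

/-- A gallery of `F` on the pair of distinct indices `(a, b)`. -/
def IsGallery {n q : ℕ} (F : TropFan1 n q) (a b : Fin q) (l : Fin n → ℤ) : Prop :=
  a ≠ b ∧ F.w a = 1 ∧ F.w b = 1 ∧ dotZ l (F.v a) = 1 ∧ dotZ l (F.v b) = -1 ∧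
    ∀ j, j ≠ a → j ≠ b → dotZ l (F.v j) = 0


/-- The surjective ℤ-linear map `x ↦ A.mulVec x : ℤⁿ → ℤᴺ` exhibits the fan `F`
as a direct sum of one-dimensional Bergman fans, with blocks `I_t = B⁻¹(t)` of the
partition of `Fin N` (blocks nonempty since `B` is surjective), ray index `a0 t`
playing the role of `a(t,0)` and ray indices `a1 s` (for `s ∈ I_t`, i.e. `B s = t`)
playing the role of `a(t,s)`; all these ray indices are pairwise distinct and have
weight `1`. -/
def ExhibitsBergman {n q : ℕ} (N r : ℕ) (F : TropFan1 n q)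
    (A : Matrix (Fin N) (Fin n) ℤ) (B : Fin N → Fin r)
    (a0 : Fin r → Fin q) (a1 : Fin N → Fin q) : Prop :=
  Function.Surjective (A.mulVec : (Fin n → ℤ) → (Fin N → ℤ)) ∧
  Function.Surjective B ∧
  Function.Injective a0 ∧ Function.Injective a1 ∧
  (∀ t s, a0 t ≠ a1 s) ∧
  (∀ t, F.w (a0 t) = 1) ∧ (∀ s, F.w (a1 s) = 1) ∧
  (∀ s : Fin N, A.mulVec (F.v (a1 s)) = Pi.single s 1) ∧
  (∀ t : Fin r, A.mulVec (F.v (a0 t)) = fun s => if B s = t then -1 else 0) ∧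
  (∀ j : Fin q, (∀ t, j ≠ a0 t) → (∀ s, j ≠ a1 s) → A.mulVec (F.v j) = 0)

open scoped Classical in
/-- The ℤ-linear map `x ↦ P.mulVec x : ℤⁿ → ℤʳ` maps `F` onto a direct sum of
one-dimensional Bergman fans with pushforward weights `1`; the blocks of the partition
of `Fin r` are the fibres of the surjection `J : Fin r → Fin m`, and `γ j` records the
positive multiple carrying the image of the ray `v j` (with `γ j = 0` when the ray is
killed). -/
def MapsOntoBergman {n q : ℕ} (r m : ℕ) (F : TropFan1 n q)
    (P : Matrix (Fin r) (Fin n) ℤ) (J : Fin r → Fin m) : Prop :=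
  Function.Surjective J ∧
  ∃ γ : Fin q → ℤ,
    (∀ j : Fin q, (P.mulVec (F.v j) = 0 ∧ γ j = 0) ∨
      (0 < γ j ∧ ∃ s : Fin r, P.mulVec (F.v j) = γ j • Pi.single s 1) ∨
      (0 < γ j ∧ ∃ t : Fin m, P.mulVec (F.v j) = fun s => if J s = t then -γ j else 0)) ∧
    (∀ s : Fin r,
      ∑ j ∈ Finset.univ.filter
          (fun j => ∃ c : ℤ, 0 < c ∧ P.mulVec (F.v j) = c • Pi.single s 1),
        F.w j * γ j = 1) ∧
    (∀ t : Fin m,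
      ∑ j ∈ Finset.univ.filter
          (fun j => ∃ c : ℤ, 0 < c ∧ P.mulVec (F.v j) = fun s => if J s = t then -c else 0),
        F.w j * γ j = 1)


-- ## aux lemmas
open Finset

lemma dotZ_sub {n : ℕ} (l l' x : Fin n → ℤ) : dotZ (l - l') x = dotZ l x - dotZ l' x := by
  simp [dotZ, sub_mul, Finset.sum_sub_distrib]

lemma dotZ_neg {n : ℕ} (l x : Fin n → ℤ) : dotZ (-l) x = -dotZ l x := by
  simp [dotZ, Finset.sum_neg_distrib]

lemma dotZ_add {n : ℕ} (l l' x : Fin n → ℤ) : dotZ (l + l') x = dotZ l x + dotZ l' x := by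
  simp [dotZ, add_mul, Finset.sum_add_distrib]

lemma dot_balance {n q : ℕ} (F : TropFan1 n q) (l : Fin n → ℤ) :
    ∑ i, F.w i * dotZ l (F.v i) = 0 := by
  have h : ∀ j, ∑ i, F.w i * F.v i j = 0 := by
    intro j
    have := congrFun F.balanced j
    simpa using this
  calc ∑ i, F.w i * dotZ l (F.v i) = ∑ i, ∑ j, l j * (F.w i * F.v i j) := by
        simp only [dotZ, Finset.mul_sum]; exact Finset.sum_congr rfl (fun i _ => by
          exact Finset.sum_congr rfl (fun j _ => by ring))
    _ = ∑ j, l j * ∑ i, F.w i * F.v i j := by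
        rw [Finset.sum_comm]; exact Finset.sum_congr rfl (fun j _ => by rw [Finset.mul_sum])
    _ = 0 := by simp [h]

/-- a sum of nonnegative integers equal to 1 has exactly one nonzero term, equal to 1. -/
lemma sum_nonneg_eq_one {ι : Type*} [Fintype ι] [DecidableEq ι] (f : ι → ℤ) (h0 : ∀ i, 0 ≤ f i)
    (h1 : ∑ i, f i = 1) : ∃ i0, f i0 = 1 ∧ ∀ i, i ≠ i0 → f i = 0 := by
  have hne : ∃ i0, f i0 ≠ 0 := by
    by_contra h
    push_neg at h
    simp [h] at h1
  obtain ⟨i0, hi0⟩ := hne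
  have h1' : 1 ≤ f i0 := lt_of_le_of_ne (h0 i0) (Ne.symm hi0)
  have hsplit : f i0 + ∑ i ∈ Finset.univ.erase i0, f i = 1 := by
    rw [← h1]; exact Finset.add_sum_erase _ f (Finset.mem_univ i0)
  have hrest : 0 ≤ ∑ i ∈ Finset.univ.erase i0, f i :=
    Finset.sum_nonneg (fun i _ => h0 i)
  have hfi0 : f i0 = 1 := le_antisymm (by omega) h1'
  have hrest0 : ∑ i ∈ Finset.univ.erase i0, f i = 0 := by omega
  refine ⟨i0, hfi0, fun i hi => ?_⟩
  have := (Finset.sum_eq_zero_iff_of_nonneg (fun i _ => h0 i)).mp hrest0 i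
    (Finset.mem_erase.mpr ⟨hi, Finset.mem_univ i⟩)
  exact this

/-- a functional vanishing on all rays is zero (rays span ℝⁿ). -/
lemma dot_inj {n q : ℕ} (F : TropFan1 n q) (l : Fin n → ℤ)
    (h : ∀ i, dotZ l (F.v i) = 0) : l = 0 := by
  set φ : (Fin n → ℝ) →ₗ[ℝ] ℝ :=
    { toFun := fun x => ∑ j, (l j : ℝ) * x j
      map_add' := by intro x y; simp [mul_add, Finset.sum_add_distrib]
      map_smul' := by
        intro c x; simp [Finset.mul_sum, smul_eq_mul]
        exact Finset.sum_congr rfl (fun j _ => by ring) } with hφ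
  have hker : Submodule.span ℝ (Set.range fun i => fun j => ((F.v i j : ℝ))) ≤
      LinearMap.ker φ := by
    rw [Submodule.span_le]
    rintro x ⟨i, rfl⟩
    simp only [SetLike.mem_coe, LinearMap.mem_ker]
    have : ((dotZ l (F.v i) : ℤ) : ℝ) = 0 := by rw [h i]; simp
    simpa [hφ, dotZ] using this
  rw [F.spans] at hker
  funext j
  have : φ (Pi.single j 1) = 0 := by
    have := hker (Submodule.mem_top (x := Pi.single j (1:ℝ)))
    simpa using this
  have hval : (l j : ℝ) = 0 := by
    simpa [hφ, Pi.single_apply, Finset.sum_ite_eq'] using this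
  exact_mod_cast hval

-- ## gallery combinatorics

/-- the pattern of dot values of a gallery functional. -/
def gv {q : ℕ} (a b i : Fin q) : ℤ := (if i = a then 1 else 0) - (if i = b then 1 else 0)

lemma gallery_dot {n q : ℕ} (F : TropFan1 n q) {a b : Fin q} {l : Fin n → ℤ}
    (h : IsGallery F a b l) (i : Fin q) : dotZ l (F.v i) = gv a b i := by
  obtain ⟨hab, _, _, ha, hb, hz⟩ := h
  unfold gv
  by_cases hia : i = a
  · subst hia; simp [ha, Ne.symm hab, hab]
  · by_cases hib : i = b
    · subst hib; simp [hb, hia]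
    · simp [hia, hib, hz i hia hib]

lemma gallery_unique {n q : ℕ} (F : TropFan1 n q) {a b : Fin q} {l l' : Fin n → ℤ}
    (h : IsGallery F a b l) (h' : IsGallery F a b l') : l = l' := by
  have : l - l' = 0 := dot_inj F _ (fun i => by
    rw [dotZ_sub, gallery_dot F h, gallery_dot F h', sub_self])
  have := congrArg (· + l') this
  simpa using this

def grel {n q : ℕ} (F : TropFan1 n q) (a b : Fin q) : Prop := ∃ l, IsGallery F a b l

lemma grel_ne {n q : ℕ} {F : TropFan1 n q} {a b : Fin q} (h : grel F a b) : a ≠ b :=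
  h.choose_spec.1

lemma grel_symm {n q : ℕ} {F : TropFan1 n q} {a b : Fin q} (h : grel F a b) : grel F b a := by
  obtain ⟨l, hab, wa, wb, ha, hb, hz⟩ := h
  exact ⟨-l, Ne.symm hab, wb, wa, by simp [dotZ_neg, hb], by simp [dotZ_neg, ha],
    fun j hja hjb => by rw [dotZ_neg, hz j hjb hja]; ring⟩

lemma grel_w1 {n q : ℕ} {F : TropFan1 n q} {a b : Fin q} (h : grel F a b) : F.w a = 1 :=
  h.choose_spec.2.1

lemma grel_trans' {n q : ℕ} {F : TropFan1 n q} {a b c : Fin q} (hab : grel F a b)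
    (hbc : grel F b c) (hac : a ≠ c) : grel F a c := by
  obtain ⟨l, hl⟩ := hab
  obtain ⟨l', hl'⟩ := hbc
  refine ⟨l + l', hac, hl.2.1, hl'.2.2.1, ?_, ?_, ?_⟩
  · rw [dotZ_add, gallery_dot F hl a, gallery_dot F hl' a]
    simp [gv, hl.1, hac]
  · rw [dotZ_add, gallery_dot F hl c, gallery_dot F hl' c]
    simp [gv, Ne.symm hac, (grel_ne ⟨l', hl'⟩).symm, hl'.1.symm]
  · intro j hja hjc
    rw [dotZ_add, gallery_dot F hl j, gallery_dot F hl' j]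
    by_cases hjb : j = b
    · subst hjb; simp [gv, hja, hjc, (grel_ne ⟨l, hl⟩).symm]
    · simp [gv, hja, hjb, hjc]

/-- the equivalence relation: equal or related by a gallery. -/
def erel {n q : ℕ} (F : TropFan1 n q) (a b : Fin q) : Prop := a = b ∨ grel F a b

lemma erel_refl {n q : ℕ} (F : TropFan1 n q) (a : Fin q) : erel F a a := Or.inl rfl

lemma erel_symm {n q : ℕ} {F : TropFan1 n q} {a b : Fin q} (h : erel F a b) : erel F b a := by
  rcases h with h | h
  · exact Or.inl h.symm
  · exact Or.inr (grel_symm h)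

lemma erel_trans {n q : ℕ} {F : TropFan1 n q} {a b c : Fin q} (h : erel F a b)
    (h' : erel F b c) : erel F a c := by
  rcases h with rfl | h
  · exact h'
  · rcases h' with rfl | h'
    · exact Or.inr h
    · by_cases hac : a = c
      · exact Or.inl hac
      · exact Or.inr (grel_trans' h h' hac)

open scoped Classical in
noncomputable def cls {n q : ℕ} (F : TropFan1 n q) (a : Fin q) : Finset (Fin q) :=
  Finset.univ.filter (erel F a)

lemma mem_cls {n q : ℕ} {F : TropFan1 n q} {a b : Fin q} :
    b ∈ cls F a ↔ erel F a b := by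
  classical
  simp [cls]

lemma cls_nonempty {n q : ℕ} (F : TropFan1 n q) (a : Fin q) : (cls F a).Nonempty :=
  ⟨a, mem_cls.mpr (erel_refl F a)⟩

lemma cls_eq {n q : ℕ} {F : TropFan1 n q} {a b : Fin q} (h : erel F a b) :
    cls F a = cls F b := by
  ext c
  simp only [mem_cls]
  exact ⟨fun hc => erel_trans (erel_symm h) hc, fun hc => erel_trans h hc⟩

noncomputable def gbase {n q : ℕ} (F : TropFan1 n q) (a : Fin q) : Fin q :=
  (cls F a).min' (cls_nonempty F a)

lemma gbase_erel {n q : ℕ} (F : TropFan1 n q) (a : Fin q) : erel F a (gbase F a) :=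
  mem_cls.mp ((cls F a).min'_mem (cls_nonempty F a))

lemma gbase_eq {n q : ℕ} {F : TropFan1 n q} {a b : Fin q} (h : erel F a b) :
    gbase F a = gbase F b := by
  unfold gbase
  congr 1
  exact cls_eq h

lemma gbase_gbase {n q : ℕ} (F : TropFan1 n q) (a : Fin q) :
    gbase F (gbase F a) = gbase F a :=
  (gbase_eq (gbase_erel F a)).symm

open scoped Classical in
noncomputable def gfun {n q : ℕ} (F : TropFan1 n q) (a b : Fin q) : Fin n → ℤ :=
  if h : grel F a b then h.choose else 0

lemma gfun_spec {n q : ℕ} {F : TropFan1 n q} {a b : Fin q} (h : grel F a b) :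
    IsGallery F a b (gfun F a b) := by
  classical
  rw [gfun, dif_pos h]
  exact h.choose_spec

-- ## existence of a gallery from regularity

lemma tropEvalZ_nonneg {n k : ℕ} (l : Fin k → Fin n → ℤ) (x : Fin n → ℤ) :
    0 ≤ tropEvalZ l x :=
  (Finset.le_fold_max _).mpr (Or.inl le_rfl)

lemma le_tropEvalZ {n k : ℕ} (l : Fin k → Fin n → ℤ) (x : Fin n → ℤ) (s : Fin k) :
    dotZ (l s) x ≤ tropEvalZ l x :=
  (Finset.le_fold_max _).mpr (Or.inr ⟨s, Finset.mem_univ s, le_rfl⟩)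

lemma pos_mul_eq_one {a b : ℤ} (ha : 0 < a) (h : a * b = 1) : a = 1 ∧ b = 1 := by
  rcases Int.mul_eq_one_iff_eq_one_or_neg_one.mp h with ⟨h1, h2⟩ | ⟨h1, h2⟩
  · exact ⟨h1, h2⟩
  · omega

lemma pos_mul_eq_neg_one {a b : ℤ} (ha : 0 < a) (h : a * b = -1) : a = 1 ∧ b = -1 := by
  have h' : a * (-b) = 1 := by linarith
  obtain ⟨h1, h2⟩ := pos_mul_eq_one ha h'
  exact ⟨h1, by omega⟩

lemma exists_gallery {n q : ℕ} (F : TropFan1 n q)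
    (hreg : ∃ (k : ℕ) (c : Fin k → Fin n → ℤ), ∑ i, F.w i * tropEvalZ c (F.v i) = 1) :
    ∃ a b l, IsGallery F a b l := by
  classical
  obtain ⟨k, c, hc⟩ := hreg
  obtain ⟨i0, hi0, hz⟩ := sum_nonneg_eq_one (fun i => F.w i * tropEvalZ c (F.v i))
    (fun i => mul_nonneg (le_of_lt (F.w_pos i)) (tropEvalZ_nonneg c (F.v i))) hc
  obtain ⟨hw0, hM0⟩ := pos_mul_eq_one (F.w_pos i0) hi0
  have hMz : ∀ i, i ≠ i0 → tropEvalZ c (F.v i) = 0 := by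
    intro i hi
    have h1 := F.w_pos i
    have h2 := tropEvalZ_nonneg c (F.v i)
    have h3 := hz i hi
    nlinarith
  have hs : ∃ s, dotZ (c s) (F.v i0) = 1 := by
    by_contra h
    push_neg at h
    have hle : tropEvalZ c (F.v i0) ≤ 0 := by
      unfold tropEvalZ
      refine (Finset.fold_max_le _).mpr ⟨le_rfl, fun s _ => ?_⟩
      have h1 := le_tropEvalZ c (F.v i0) s
      have h2 := h s
      omega
    omega
  obtain ⟨s, hds⟩ := hs
  set l := c s with hl
  -- dot values of l on the other rays are nonpositive
  have hnonpos : ∀ i, i ≠ i0 → dotZ l (F.v i) ≤ 0 := by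
    intro i hi
    have h1 := le_tropEvalZ c (F.v i) s
    rw [hMz i hi] at h1
    exact h1
  -- define the negated terms away from i0
  set g : Fin q → ℤ := fun i => if i = i0 then 0 else -(F.w i * dotZ l (F.v i)) with hg
  have hgnonneg : ∀ i, 0 ≤ g i := by
    intro i
    by_cases hi : i = i0
    · simp [hg, hi]
    · simp only [hg, hi, if_neg hi]
      have := hnonpos i hi
      have := F.w_pos i
      nlinarith
  have hgsum : ∑ i, g i = 1 := by
    have hbal := dot_balance F l
    have h1 : ∑ i ∈ Finset.univ.erase i0, g i + g i0 = ∑ i, g i :=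
      Finset.sum_erase_add _ _ (Finset.mem_univ i0)
    have h2 : ∑ i ∈ Finset.univ.erase i0, F.w i * dotZ l (F.v i)
        + F.w i0 * dotZ l (F.v i0) = 0 := by
      rw [Finset.sum_erase_add _ _ (Finset.mem_univ i0)]; exact hbal
    have h3 : ∑ i ∈ Finset.univ.erase i0, g i
        = -∑ i ∈ Finset.univ.erase i0, F.w i * dotZ l (F.v i) := by
      rw [← Finset.sum_neg_distrib]
      refine Finset.sum_congr rfl (fun i hi => ?_)
      have : i ≠ i0 := (Finset.mem_erase.mp hi).1
      simp [hg, this]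
    have h4 : g i0 = 0 := by simp [hg]
    rw [← h1, h3, h4, hw0] at *
    omega
  obtain ⟨i1, hi1, hz1⟩ := sum_nonneg_eq_one g hgnonneg hgsum
  have hne : i1 ≠ i0 := by
    intro h
    rw [h] at hi1
    simp [hg] at hi1
  have hd1 : F.w i1 * dotZ l (F.v i1) = -1 := by
    have := hi1
    simp only [hg, if_neg hne] at this
    omega
  obtain ⟨hw1, hdv1⟩ := pos_mul_eq_neg_one (F.w_pos i1) hd1
  refine ⟨i0, i1, l, Ne.symm hne, hw0, hw1, hds, hdv1, fun j hj0 hj1 => ?_⟩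
  have := hz1 j hj1
  simp only [hg, if_neg hj0] at this
  have := F.w_pos j
  nlinarith

-- ## the partition into classes

open scoped Classical in
noncomputable def Dset {n q : ℕ} (F : TropFan1 n q) : Finset (Fin q) :=
  Finset.univ.filter (fun s => s ≠ gbase F s)

open scoped Classical in
noncomputable def Rset {n q : ℕ} (F : TropFan1 n q) : Finset (Fin q) :=
  Finset.univ.filter (fun t => gbase F t = t ∧ ∃ b, grel F t b)

lemma mem_Dset {n q : ℕ} {F : TropFan1 n q} {s : Fin q} :
    s ∈ Dset F ↔ s ≠ gbase F s := by
  classical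
  simp [Dset]

lemma mem_Rset {n q : ℕ} {F : TropFan1 n q} {t : Fin q} :
    t ∈ Rset F ↔ gbase F t = t ∧ ∃ b, grel F t b := by
  classical
  simp [Rset]

lemma Dset_grel {n q : ℕ} {F : TropFan1 n q} {s : Fin q} (h : s ∈ Dset F) :
    grel F s (gbase F s) := by
  rcases gbase_erel F s with he | he
  · exact absurd he (mem_Dset.mp h)
  · exact he

lemma gbase_mem_Rset {n q : ℕ} {F : TropFan1 n q} {s : Fin q} (h : s ∈ Dset F) :
    gbase F s ∈ Rset F :=
  mem_Rset.mpr ⟨gbase_gbase F s, ⟨s, grel_symm (Dset_grel h)⟩⟩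

lemma Rset_elim {n q : ℕ} {F : TropFan1 n q} {t : Fin q} (h : t ∈ Rset F) :
    ∃ b ∈ Dset F, gbase F b = t := by
  obtain ⟨hbase, b, hb⟩ := mem_Rset.mp h
  have hbb : gbase F b = t := by
    rw [← gbase_eq (Or.inr hb : erel F t b)]
    exact hbase
  exact ⟨b, mem_Dset.mpr (by rw [hbb]; exact (grel_ne hb).symm), hbb⟩

-- ## more dotZ linearity

lemma dotZ_sum_smul {n : ℕ} {ι : Type*} [Fintype ι] (l : Fin n → ℤ) (y : ι → ℤ)
    (u : ι → Fin n → ℤ) : dotZ l (∑ d, y d • u d) = ∑ d, y d * dotZ l (u d) := by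
  unfold dotZ
  simp only [Finset.sum_apply, Pi.smul_apply, smul_eq_mul, Finset.mul_sum]
  rw [Finset.sum_comm]
  refine Finset.sum_congr rfl (fun d _ => ?_)
  exact Finset.sum_congr rfl (fun j _ => by ring)

lemma dotZ_sum_left {n : ℕ} {ι : Type*} [Fintype ι] (c : ι → ℤ) (L : ι → Fin n → ℤ)
    (x : Fin n → ℤ) : dotZ (fun j => ∑ d, c d * L d j) x = ∑ d, c d * dotZ (L d) x := by
  unfold dotZ
  simp only [Finset.sum_mul]
  rw [Finset.sum_comm]
  refine Finset.sum_congr rfl (fun d _ => ?_)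
  rw [Finset.mul_sum]
  exact Finset.sum_congr rfl (fun j _ => by ring)

lemma mulVec_dotZ {r' n : ℕ} (P : Matrix (Fin r') (Fin n) ℤ) (x : Fin n → ℤ) (s : Fin r') :
    P.mulVec x s = dotZ (P s) x := rfl

-- ## sums of terms ≥ 1

lemma sum_ge_one_eq_one {ι : Type*} [DecidableEq ι] (S : Finset ι) (f : ι → ℤ)
    (hf : ∀ j ∈ S, 1 ≤ f j) (h : ∑ j ∈ S, f j = 1) : ∃ j0, S = {j0} ∧ f j0 = 1 := by
  have hne : S.Nonempty := by
    rcases S.eq_empty_or_nonempty with rfl | hS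
    · simp at h
    · exact hS
  obtain ⟨j0, hj0⟩ := hne
  have hsplit : ∑ j ∈ S.erase j0, f j + f j0 = 1 := by
    rw [Finset.sum_erase_add _ _ hj0]; exact h
  have hcard : (S.erase j0).card • (1:ℤ) ≤ ∑ j ∈ S.erase j0, f j :=
    Finset.card_nsmul_le_sum _ _ _ (fun j hj => hf j (Finset.mem_of_mem_erase hj))
  have h1 : 1 ≤ f j0 := hf j0 hj0
  have hcard' : ((S.erase j0).card : ℤ) ≤ ∑ j ∈ S.erase j0, f j := by
    simpa using hcard
  have hez : (S.erase j0).card = 0 := by omega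
  have hempty : S.erase j0 = ∅ := Finset.card_eq_zero.mp hez
  refine ⟨j0, ?_, by omega⟩
  ext x
  simp only [Finset.mem_singleton]
  constructor
  · intro hx
    by_contra hne
    have : x ∈ S.erase j0 := Finset.mem_erase.mpr ⟨hne, hx⟩
    rw [hempty] at this
    simp at this
  · rintro rfl; exact hj0

lemma gv_sub {q : ℕ} (a b c i : Fin q) : gv a c i - gv b c i = gv a b i := by
  unfold gv; ring


lemma maps_rows_galleries {n q r m : ℕ} (F : TropFan1 n q) (P : Matrix (Fin r) (Fin n) ℤ)
    (J : Fin r → Fin m) (h : MapsOntoBergman r m F P J) :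
    ∃ (A : Fin r → Fin q) (Bb : Fin m → Fin q),
      ∀ s : Fin r, IsGallery F (A s) (Bb (J s)) (P s) := by
  classical
  obtain ⟨hJ, γ, htri, hs1, hs2⟩ := h
  have hwγ : ∀ j : Fin q, P.mulVec (F.v j) ≠ 0 → 1 ≤ F.w j * γ j := by
    intro j hne
    have hγpos : 0 < γ j := by
      rcases htri j with ⟨h0, _⟩ | ⟨hp, _⟩ | ⟨hp, _⟩
      · exact absurd h0 hne
      · exact hp
      · exact hp
    have hw := F.w_pos j
    nlinarith
  have key1 : ∀ s : Fin r, ∃ j : Fin q, F.w j = 1 ∧ P.mulVec (F.v j) = Pi.single s 1 ∧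
      ∀ j' (c : ℤ), 0 < c → P.mulVec (F.v j') = c • Pi.single s 1 → j' = j := by
    intro s
    obtain ⟨j0, hSsing, hprod⟩ := sum_ge_one_eq_one _ (fun j => F.w j * γ j)
      (fun j hj => by
        obtain ⟨c, hc, hPc⟩ := (Finset.mem_filter.mp hj).2
        refine hwγ j (fun h0 => ?_)
        have := congrFun hPc s
        rw [h0] at this
        simp [Pi.single_apply] at this
        omega) (hs1 s)
    have hj0mem : j0 ∈ Finset.univ.filter
        (fun j => ∃ c : ℤ, 0 < c ∧ P.mulVec (F.v j) = c • Pi.single s 1) := by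
      rw [hSsing]; exact Finset.mem_singleton_self j0
    obtain ⟨c, hc, hPc⟩ := (Finset.mem_filter.mp hj0mem).2
    have hPne : P.mulVec (F.v j0) ≠ 0 := by
      intro h0
      have := congrFun hPc s
      rw [h0] at this
      simp [Pi.single_apply] at this
      omega
    obtain ⟨hw1, hγ1⟩ := pos_mul_eq_one (F.w_pos j0) hprod
    have hP0 : P.mulVec (F.v j0) = Pi.single s 1 := by
      rcases htri j0 with ⟨h0, _⟩ | ⟨hp, s', hP2⟩ | ⟨hp, t, hP3⟩
      · exact absurd h0 hPne
      · rw [hγ1, one_smul] at hP2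
        have hss : s' = s := by
          have h1 := congrFun hP2 s'
          have h2 := congrFun hPc s'
          rw [h1] at h2
          by_contra hne
          simp [Pi.single_apply, hne, Ne.symm hne] at h2
        rw [hss] at hP2
        exact hP2
      · exfalso
        have h1 := congrFun hP3 s
        have h2 := congrFun hPc s
        rw [h1] at h2
        simp [Pi.single_apply] at h2
        split_ifs at h2 <;> omega
    refine ⟨j0, hw1, hP0, fun j' c' hc' hP' => ?_⟩
    have : j' ∈ Finset.univ.filter
        (fun j => ∃ c : ℤ, 0 < c ∧ P.mulVec (F.v j) = c • Pi.single s 1) :=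
      Finset.mem_filter.mpr ⟨Finset.mem_univ _, c', hc', hP'⟩
    rw [hSsing] at this
    exact Finset.mem_singleton.mp this
  have key2 : ∀ t : Fin m, ∃ j : Fin q, F.w j = 1 ∧
      (P.mulVec (F.v j) = fun s => if J s = t then -1 else 0) ∧
      ∀ j' c, 0 < c → (P.mulVec (F.v j') = fun s => if J s = t then -c else 0) → j' = j := by
    intro t
    obtain ⟨st, hst⟩ := hJ t
    obtain ⟨j1, hTsing, hprod⟩ := sum_ge_one_eq_one _ (fun j => F.w j * γ j)
      (fun j hj => by
        obtain ⟨c, hc, hPc⟩ := (Finset.mem_filter.mp hj).2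
        refine hwγ j (fun h0 => ?_)
        have := congrFun hPc st
        rw [h0, hst] at this
        simp at this
        omega) (hs2 t)
    have hj1mem : j1 ∈ Finset.univ.filter
        (fun j => ∃ c : ℤ, 0 < c ∧ P.mulVec (F.v j) = fun s => if J s = t then -c else 0) := by
      rw [hTsing]; exact Finset.mem_singleton_self j1
    obtain ⟨c, hc, hPc⟩ := (Finset.mem_filter.mp hj1mem).2
    have hPne : P.mulVec (F.v j1) ≠ 0 := by
      intro h0
      have := congrFun hPc st
      rw [h0, hst] at this
      simp at this
      omega
    obtain ⟨hw1, hγ1⟩ := pos_mul_eq_one (F.w_pos j1) hprod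
    have hP0 : P.mulVec (F.v j1) = fun s => if J s = t then -1 else 0 := by
      rcases htri j1 with ⟨h0, _⟩ | ⟨hp, s', hP2⟩ | ⟨hp, t', hP3⟩
      · exact absurd h0 hPne
      · exfalso
        have h1 := congrFun hP2 s'
        have h2 := congrFun hPc s'
        rw [h1] at h2
        simp [Pi.single_apply, hγ1] at h2
        split_ifs at h2 <;> omega
      · rw [hγ1] at hP3
        have htt : t' = t := by
          have h1 := congrFun hP3 st
          have h2 := congrFun hPc st
          rw [h1, hst] at h2
          by_contra hne
          rw [if_neg (fun hh : t = t' => hne hh.symm), if_pos rfl] at h2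
          omega
        rw [htt] at hP3
        exact hP3
    refine ⟨j1, hw1, hP0, fun j' c' hc' hP' => ?_⟩
    have : j' ∈ Finset.univ.filter
        (fun j => ∃ c : ℤ, 0 < c ∧ P.mulVec (F.v j) = fun s => if J s = t then -c else 0) :=
      Finset.mem_filter.mpr ⟨Finset.mem_univ _, c', hc', hP'⟩
    rw [hTsing] at this
    exact Finset.mem_singleton.mp this
  choose A hwA hPA huA using key1
  choose Bb hwB hPB huB using key2
  refine ⟨A, Bb, fun s => ?_⟩
  have hvA : P.mulVec (F.v (A s)) s = 1 := by rw [hPA s]; simp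
  have hvB : P.mulVec (F.v (Bb (J s))) s = -1 := by rw [hPB (J s)]; simp
  have hdA : dotZ (P s) (F.v (A s)) = 1 := by rw [← mulVec_dotZ]; exact hvA
  have hdB : dotZ (P s) (F.v (Bb (J s))) = -1 := by rw [← mulVec_dotZ]; exact hvB
  refine ⟨?_, hwA s, hwB (J s), hdA, hdB, ?_⟩
  · intro hEq
    rw [hEq, hvB] at hvA
    omega
  · intro j hjA hjB
    show dotZ (P s) (F.v j) = 0
    rw [← mulVec_dotZ]
    rcases htri j with ⟨h0, _⟩ | ⟨hp, s', hP2⟩ | ⟨hp, t, hP3⟩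
    · rw [h0]; rfl
    · by_cases hss : s = s'
      · exfalso
        rw [← hss] at hP2
        exact hjA (huA s j (γ j) hp hP2)
      · rw [hP2]
        simp [Pi.single_apply, hss]
    · by_cases hJt : J s = t
      · exfalso
        rw [← hJt] at hP3
        exact hjB (huB (J s) j (γ j) hp hP3)
      · rw [hP3]
        simp [hJt]


/-- 'Minimal model programme' for 1-cycles, part 2 (Theorem 3.16.2, universality):
a regular one-dimensional fan admits a projection `π_F` (given by the matrix `AF`)
onto a direct sum of one-dimensional Bergman fans through which every other such
projection factors. -/
theorem mmp_one_cycles_part2 {n q : ℕ} (F : TropFan1 n q)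
    (hreg : ∃ (k : ℕ) (c : Fin k → Fin n → ℤ), ∑ i, F.w i * tropEvalZ c (F.v i) = 1) :
    ∃ D : ℕ, 1 ≤ D ∧ ∃ AF : Matrix (Fin D) (Fin n) ℤ,
      (∃ (r : ℕ) (B : Fin D → Fin r) (a0 : Fin r → Fin q) (a1 : Fin D → Fin q),
        ExhibitsBergman D r F AF B a0 a1) ∧
      ∀ r : ℕ, 1 ≤ r → ∀ P : Matrix (Fin r) (Fin n) ℤ,
        (∃ (m : ℕ) (J : Fin r → Fin m), MapsOntoBergman r m F P J) →
        ∃ ψ : Matrix (Fin r) (Fin D) ℤ, P = ψ * AF := by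
  classical
  obtain ⟨ga, gb, gl, hgal0⟩ := exists_gallery F hreg
  have hDne : (Dset F).Nonempty := by
    by_cases hga : ga = gbase F ga
    · refine ⟨gb, mem_Dset.mpr ?_⟩
      intro hgb
      have hb : gbase F ga = gbase F gb := gbase_eq (Or.inr ⟨gl, hgal0⟩)
      exact hgal0.1 (by rw [hga, hb, ← hgb])
    · exact ⟨ga, mem_Dset.mpr hga⟩
  set Ds := Dset F with hDs
  set eD := Ds.equivFin with heD
  set eR := (Rset F).equivFin with heR
  set a1 : Fin Ds.card → Fin q := fun d => (eD.symm d).1 with ha1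
  set a0 : Fin (Rset F).card → Fin q := fun t => (eR.symm t).1 with ha0
  have ha1mem : ∀ d, a1 d ∈ Dset F := fun d => (eD.symm d).2
  have ha0mem : ∀ t, a0 t ∈ Rset F := fun t => (eR.symm t).2
  have hgrel : ∀ d, grel F (a1 d) (gbase F (a1 d)) := fun d => Dset_grel (ha1mem d)
  set AF : Matrix (Fin Ds.card) (Fin n) ℤ := fun d => gfun F (a1 d) (gbase F (a1 d)) with hAFd
  have hrow : ∀ d, IsGallery F (a1 d) (gbase F (a1 d)) (AF d) := fun d => gfun_spec (hgrel d)
  have hdot : ∀ d i, AF.mulVec (F.v i) d = gv (a1 d) (gbase F (a1 d)) i :=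
    fun d i => by rw [mulVec_dotZ]; exact gallery_dot F (hrow d) i
  have ha1nb : ∀ d x, a1 d ≠ gbase F x := by
    intro d x hx
    apply mem_Dset.mp (ha1mem d)
    rw [hx, gbase_gbase]
  have ha1inj : Function.Injective a1 :=
    fun d d' h => eD.symm.injective (Subtype.coe_injective h)
  have ha0inj : Function.Injective a0 :=
    fun t t' h => eR.symm.injective (Subtype.coe_injective h)
  have ha0base : ∀ t, gbase F (a0 t) = a0 t := fun t => (mem_Rset.mp (ha0mem t)).1
  have hne01 : ∀ t d, a0 t ≠ a1 d := by
    intro t d h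
    exact ha1nb d (a0 t) (by rw [← h]; exact (ha0base t).symm)
  set B : Fin Ds.card → Fin (Rset F).card :=
    fun d => eR ⟨gbase F (a1 d), gbase_mem_Rset (ha1mem d)⟩ with hBdef
  have hBiff : ∀ d t, B d = t ↔ gbase F (a1 d) = a0 t := by
    intro d t
    rw [hBdef]
    rw [Equiv.apply_eq_iff_eq_symm_apply, Subtype.ext_iff]
  have hsingle : ∀ d, AF.mulVec (F.v (a1 d)) = Pi.single d 1 := by
    intro d
    funext d'
    rw [hdot d' (a1 d), Pi.single_apply]
    unfold gv
    by_cases h : d' = d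
    · subst h
      simp [ha1nb d' (a1 d')]
    · have h1 : a1 d ≠ a1 d' := fun hh => h (ha1inj hh).symm
      simp [h1, ha1nb d (a1 d'), h]
  have hsurj : Function.Surjective (AF.mulVec : (Fin n → ℤ) → (Fin Ds.card → ℤ)) := by
    intro y
    refine ⟨∑ d, y d • F.v (a1 d), ?_⟩
    funext d'
    rw [mulVec_dotZ, dotZ_sum_smul]
    calc ∑ d, y d * dotZ (AF d') (F.v (a1 d))
        = ∑ d, y d * (if d' = d then 1 else 0) := by
          refine Finset.sum_congr rfl fun d _ => ?_
          rw [← mulVec_dotZ, hsingle d, Pi.single_apply]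
      _ = y d' := by simp
  have hBsurj : Function.Surjective B := by
    intro t
    obtain ⟨b, hbD, hbb⟩ := Rset_elim (ha0mem t)
    refine ⟨eD ⟨b, hbD⟩, ?_⟩
    have ha1b : a1 (eD ⟨b, hbD⟩) = b := by rw [ha1]; simp
    rw [hBiff, ha1b, hbb]
  have ha0row : ∀ t, AF.mulVec (F.v (a0 t)) = fun d => if B d = t then -1 else 0 := by
    intro t
    funext d
    rw [hdot d (a0 t)]
    unfold gv
    by_cases h : B d = t
    · rw [if_pos h]
      have hb := (hBiff d t).mp h
      rw [if_neg (hne01 t d), if_pos hb.symm]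
      norm_num
    · rw [if_neg h]
      have hb : a0 t ≠ gbase F (a1 d) := fun hh => h ((hBiff d t).mpr hh.symm)
      rw [if_neg (hne01 t d), if_neg hb]
      norm_num
  have hzero : ∀ j, (∀ t, j ≠ a0 t) → (∀ d, j ≠ a1 d) → AF.mulVec (F.v j) = 0 := by
    intro j h0 h1
    funext d
    rw [hdot d j]
    unfold gv
    have hja : j ≠ a1 d := h1 d
    have hja' : j ≠ gbase F (a1 d) := by
      intro hh
      have hmem := gbase_mem_Rset (ha1mem d)
      rw [← hh] at hmem
      refine h0 (eR ⟨j, hmem⟩) ?_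
      rw [ha0]
      simp
    simp [fun hh => hja hh, fun hh => hja' hh]
  refine ⟨Ds.card, Finset.card_pos.mpr hDne, AF,
    ⟨(Rset F).card, B, a0, a1, hsurj, hBsurj, ha0inj, ha1inj, hne01,
      fun t => by obtain ⟨b, hb⟩ := (mem_Rset.mp (ha0mem t)).2; exact grel_w1 hb,
      fun d => (hrow d).2.1, hsingle, ha0row, hzero⟩, ?_⟩
  -- universality
  intro r hr P hP
  obtain ⟨m, J, hPmaps⟩ := hP
  obtain ⟨As, Bs, hgal⟩ := maps_rows_galleries F P J hPmaps
  set ψ : Matrix (Fin r) (Fin Ds.card) ℤ :=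
    fun s d => (if a1 d = As s then 1 else 0) - (if a1 d = Bs (J s) then 1 else 0) with hψ
  refine ⟨ψ, ?_⟩
  -- the indicator sum computation
  have hsumind : ∀ (x : Fin q) (i : Fin q),
      ∑ d, (if a1 d = x then (1:ℤ) else 0) * gv (a1 d) (gbase F (a1 d)) i
        = gv x (gbase F x) i := by
    intro x i
    by_cases hx : x ∈ Dset F
    · set dx := eD ⟨x, hx⟩ with hdx
      have ha1dx : a1 dx = x := by rw [ha1, hdx]; simp
      have hterm : ∀ d, (if a1 d = x then (1:ℤ) else 0) * gv (a1 d) (gbase F (a1 d)) i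
          = if d = dx then gv (a1 d) (gbase F (a1 d)) i else 0 := by
        intro d
        by_cases h : d = dx
        · subst h
          simp [ha1dx]
        · have h1 : a1 d ≠ x := fun hh => h (ha1inj (by rw [hh, ha1dx]))
          simp [h1, h]
      rw [Finset.sum_congr rfl (fun d _ => hterm d), Finset.sum_ite_eq' Finset.univ dx, ha1dx]
      simp
    · have hxb : x = gbase F x := by
        by_contra h
        exact hx (mem_Dset.mpr h)
      have hz : gv x (gbase F x) i = 0 := by
        rw [← hxb]
        unfold gv
        ring
      rw [hz]
      refine Finset.sum_eq_zero fun d _ => ?_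
      have h1 : a1 d ≠ x := fun hh => ha1nb d x (hh.trans hxb)
      simp [h1]
  have hrows : ∀ s, P s = fun j => ∑ d, ψ s d * AF d j := by
    intro s
    have hβB : gbase F (Bs (J s)) = gbase F (As s) :=
      (gbase_eq (Or.inr ⟨P s, hgal s⟩)).symm
    have hkey : ∀ i, dotZ (fun j => ∑ d, ψ s d * AF d j) (F.v i) = dotZ (P s) (F.v i) := by
      intro i
      rw [dotZ_sum_left, gallery_dot F (hgal s) i]
      calc ∑ d, ψ s d * dotZ (AF d) (F.v i)
          = (∑ d, (if a1 d = As s then (1:ℤ) else 0) * gv (a1 d) (gbase F (a1 d)) i)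
            - ∑ d, (if a1 d = Bs (J s) then (1:ℤ) else 0) * gv (a1 d) (gbase F (a1 d)) i := by
            rw [← Finset.sum_sub_distrib]
            refine Finset.sum_congr rfl fun d _ => ?_
            rw [show dotZ (AF d) (F.v i) = gv (a1 d) (gbase F (a1 d)) i from
              gallery_dot F (hrow d) i, hψ]
            ring
        _ = gv (As s) (gbase F (As s)) i - gv (Bs (J s)) (gbase F (As s)) i := by
            rw [hsumind (As s) i, hsumind (Bs (J s)) i, hβB]
        _ = gv (As s) (Bs (J s)) i := gv_sub _ _ _ _
    have hz : (fun j => ∑ d, ψ s d * AF d j) - P s = 0 :=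
      dot_inj F _ (fun i => by rw [dotZ_sub, hkey]; ring)
    have := sub_eq_zero.mp hz
    exact this.symm
  ext s j
  rw [Matrix.mul_apply]
  exact congrFun (hrows s) j
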